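/- arXiv:2207.09532 — 2 statements merged into one kernel-verified Lean document; each statement's English description precedes it below -/
import Mathlib

section
/- Let C be an arc of length L on a circle of radius R, and let L be a lattice with L ≤ 2(A_L R)^{1/3}. Then C contains at most 2 points of the lattice. -/
open Real

noncomputable def circlePt (O : EuclideanSpace ℝ (Fin 2)) (R θ : ℝ) :
    EuclideanSpace ℝ (Fin 2) :=
  (WithLp.equiv 2 (Fin 2 → ℝ)).symm ![O 0 + R * cos θ, O 1 + R * sin θ]

/-- The arc of length `L` on the circle of radius `R` centered at `O`,
starting at angle `θ₀`. -/
noncomputable def arcOf (O : EuclideanSpace ℝ (Fin 2)) (R θ₀ L : ℝ) :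
    Set (EuclideanSpace ℝ (Fin 2)) :=
  circlePt O R '' Set.Icc θ₀ (θ₀ + L / R)

def lat (v₀ v₁ v₂ : EuclideanSpace ℝ (Fin 2)) : Set (EuclideanSpace ℝ (Fin 2)) :=
  {P | ∃ m n : ℤ, P = v₀ + (m : ℝ) • v₁ + (n : ℝ) • v₂}

noncomputable def wedge (u v : EuclideanSpace ℝ (Fin 2)) : ℝ := u 0 * v 1 - u 1 * v 0

/-!
Three distinct lattice points on the circle span a triangle whose doubled signed area is an
integer multiple of the covolume `A = |v₁ ∧ v₂|`, and it is nonzero because the points are not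
collinear, so it is at least `A`. For points at angles `a, b, c` the doubled area equals
`4R² sin((b-a)/2) sin((c-b)/2) sin((c-a)/2)`, which by `|sin x| < |x|` and AM-GM is less than
`R² ℓ³ / 8 = L³ / (8R)` when the angles lie in an interval of length `ℓ = L / R`. The hypothesis
`L ≤ 2 (A R)^{1/3}` says exactly `L³ / (8R) ≤ A`.
-/

lemma sub_mul_sub_mul_sub_le {x y z ℓ : ℝ} (hxy : x ≤ y) (hyz : y ≤ z) (hℓ : z - x ≤ ℓ) :
    (y - x) * (z - y) * (z - x) ≤ ℓ ^ 3 / 4 := by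
  have hxz : 0 ≤ z - x := by linarith
  calc (y - x) * (z - y) * (z - x) ≤ (z - x) ^ 3 / 4 := by
        nlinarith [mul_nonneg (sq_nonneg (x + z - 2 * y)) hxz]
    _ ≤ ℓ ^ 3 / 4 := by gcongr

lemma abs_sub_mul_abs_sub_mul_abs_sub_le {a b c u ℓ : ℝ} (ha : a ∈ Set.Icc u (u + ℓ))
    (hb : b ∈ Set.Icc u (u + ℓ)) (hc : c ∈ Set.Icc u (u + ℓ)) :
    |b - a| * |c - b| * |c - a| ≤ ℓ ^ 3 / 4 := by
  wlog hab : a ≤ b generalizing a b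
  · simpa only [abs_sub_comm, mul_comm, mul_left_comm, mul_assoc] using
      this hb ha (le_of_not_ge hab)
  wlog hbc : b ≤ c generalizing a b c
  · rcases le_total a c with hac | hca
    · simpa only [abs_sub_comm, mul_comm, mul_left_comm, mul_assoc] using
        this hb ha hc hac (le_of_not_ge hbc)
    · simpa only [abs_sub_comm, mul_comm, mul_left_comm, mul_assoc] using
        this hb hc ha hca hab
  rw [abs_of_nonneg (sub_nonneg.2 hab), abs_of_nonneg (sub_nonneg.2 hbc),
    abs_of_nonneg (sub_nonneg.2 (hab.trans hbc))]
  exact sub_mul_sub_mul_sub_le hab hbc (by linarith [ha.1, hc.2])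

lemma sin_add_sin_sub_sin_add (x y : ℝ) :
    sin x + sin y - sin (x + y) = 4 * sin (x / 2) * sin (y / 2) * sin ((x + y) / 2) := by
  obtain ⟨u, rfl⟩ : ∃ u, x = 2 * u := ⟨x / 2, by ring⟩
  obtain ⟨v, rfl⟩ : ∃ v, y = 2 * v := ⟨y / 2, by ring⟩
  rw [show 2 * u + 2 * v = 2 * (u + v) by ring, mul_div_cancel_left₀ _ two_ne_zero,
    mul_div_cancel_left₀ _ two_ne_zero, mul_div_cancel_left₀ _ two_ne_zero,
    sin_two_mul, sin_two_mul, sin_two_mul, sin_add, cos_add]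
  linear_combination (-2 * sin u * cos u) * sin_sq_add_cos_sq v +
    (-2 * sin v * cos v) * sin_sq_add_cos_sq u

lemma wedge_smul_add_smul (v₁ v₂ : EuclideanSpace ℝ (Fin 2)) (x y z w : ℝ) :
    wedge (x • v₁ + y • v₂) (z • v₁ + w • v₂) = (x * w - y * z) * wedge v₁ v₂ := by
  simp only [wedge, PiLp.add_apply, PiLp.smul_apply, smul_eq_mul]
  ring

lemma exists_int_wedge_sub_eq_mul_of_mem_lat {v₀ v₁ v₂ P Q S : EuclideanSpace ℝ (Fin 2)}
    (hP : P ∈ lat v₀ v₁ v₂) (hQ : Q ∈ lat v₀ v₁ v₂) (hS : S ∈ lat v₀ v₁ v₂) :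
    ∃ k : ℤ, wedge (Q - P) (S - P) = k * wedge v₁ v₂ := by
  obtain ⟨mP, nP, rfl⟩ := hP
  obtain ⟨mQ, nQ, rfl⟩ := hQ
  obtain ⟨mS, nS, rfl⟩ := hS
  have hsub : ∀ m n m' n' : ℝ, v₀ + m • v₁ + n • v₂ - (v₀ + m' • v₁ + n' • v₂)
      = (m - m') • v₁ + (n - n') • v₂ := fun _ _ _ _ ↦ by module
  refine ⟨(mQ - mP) * (nS - nP) - (nQ - nP) * (mS - mP), ?_⟩
  rw [hsub, hsub, wedge_smul_add_smul]
  push_cast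
  ring

lemma abs_wedge_le_abs_wedge_sub_of_mem_lat {v₀ v₁ v₂ P Q S : EuclideanSpace ℝ (Fin 2)}
    (hP : P ∈ lat v₀ v₁ v₂) (hQ : Q ∈ lat v₀ v₁ v₂) (hS : S ∈ lat v₀ v₁ v₂)
    (hW : wedge (Q - P) (S - P) ≠ 0) : |wedge v₁ v₂| ≤ |wedge (Q - P) (S - P)| := by
  obtain ⟨k, hk⟩ := exists_int_wedge_sub_eq_mul_of_mem_lat hP hQ hS
  rw [hk] at hW ⊢
  have hk0 : k ≠ 0 := by rintro rfl; simp at hW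
  rw [abs_mul, ← Int.cast_abs]
  exact le_mul_of_one_le_left (abs_nonneg _) (by exact_mod_cast Int.one_le_abs hk0)

lemma wedge_circlePt_sub (O : EuclideanSpace ℝ (Fin 2)) (R a b c : ℝ) :
    wedge (circlePt O R b - circlePt O R a) (circlePt O R c - circlePt O R a)
      = 4 * R ^ 2 * sin ((b - a) / 2) * sin ((c - b) / 2) * sin ((c - a) / 2) := by
  have key := sin_add_sin_sub_sin_add (b - a) (c - b)
  rw [show b - a + (c - b) = c - a by ring, sin_sub, sin_sub, sin_sub] at key
  simp only [wedge, circlePt, PiLp.sub_apply, WithLp.equiv_symm_apply, Matrix.cons_val_zero,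
    Matrix.cons_val_one]
  linear_combination R ^ 2 * key

lemma sin_half_sub_ne_zero_of_circlePt_ne {O : EuclideanSpace ℝ (Fin 2)} {R a b : ℝ}
    (h : circlePt O R a ≠ circlePt O R b) : sin ((b - a) / 2) ≠ 0 := by
  contrapose! h
  obtain ⟨n, hn⟩ := sin_eq_zero_iff.mp h
  rw [show b = a + n * (2 * π) by linarith, circlePt, circlePt, cos_add_int_mul_two_pi,
    sin_add_int_mul_two_pi]

section ThreePointsOnCircle

variable {O : EuclideanSpace ℝ (Fin 2)} {R a b c : ℝ}
  (hab : circlePt O R a ≠ circlePt O R b) (hbc : circlePt O R b ≠ circlePt O R c)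
  (hac : circlePt O R a ≠ circlePt O R c)
include hab hbc hac

lemma wedge_circlePt_sub_ne_zero (hR : R ≠ 0) :
    wedge (circlePt O R b - circlePt O R a) (circlePt O R c - circlePt O R a) ≠ 0 := by
  rw [wedge_circlePt_sub]
  have := sin_half_sub_ne_zero_of_circlePt_ne hab
  have := sin_half_sub_ne_zero_of_circlePt_ne hbc
  have := sin_half_sub_ne_zero_of_circlePt_ne hac
  positivity

lemma abs_wedge_circlePt_sub_lt (hR : R ≠ 0) {u ℓ : ℝ} (ha : a ∈ Set.Icc u (u + ℓ))
    (hb : b ∈ Set.Icc u (u + ℓ)) (hc : c ∈ Set.Icc u (u + ℓ)) :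
    |wedge (circlePt O R b - circlePt O R a) (circlePt O R c - circlePt O R a)|
      < R ^ 2 * ℓ ^ 3 / 8 := by
  have hsin : ∀ {x y : ℝ}, circlePt O R x ≠ circlePt O R y →
      |sin ((y - x) / 2)| < |(y - x) / 2| := fun h ↦
    abs_sin_lt_abs fun h0 ↦ sin_half_sub_ne_zero_of_circlePt_ne h (by rw [h0, sin_zero])
  have hprod : |sin ((b - a) / 2)| * |sin ((c - b) / 2)| * |sin ((c - a) / 2)|
      < |(b - a) / 2| * |(c - b) / 2| * |(c - a) / 2| :=
    mul_lt_mul'' (mul_lt_mul'' (hsin hab) (hsin hbc) (abs_nonneg _) (abs_nonneg _)) (hsin hac)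
      (by positivity) (abs_nonneg _)
  calc _ = 4 * R ^ 2 * (|sin ((b - a) / 2)| * |sin ((c - b) / 2)| * |sin ((c - a) / 2)|) := by
        rw [wedge_circlePt_sub, abs_mul, abs_mul, abs_mul, abs_of_pos (by positivity)]
        ring
    _ < 4 * R ^ 2 * (|(b - a) / 2| * |(c - b) / 2| * |(c - a) / 2|) :=
        mul_lt_mul_of_pos_left hprod (by positivity)
    _ = R ^ 2 / 2 * (|b - a| * |c - b| * |c - a|) := by
        simp only [abs_div, abs_two]
        ring
    _ ≤ R ^ 2 / 2 * (ℓ ^ 3 / 4) := by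
        gcongr
        exact abs_sub_mul_abs_sub_mul_abs_sub_le ha hb hc
    _ = R ^ 2 * ℓ ^ 3 / 8 := by ring

end ThreePointsOnCircle

theorem stmt_7_general (O v₀ v₁ v₂ : EuclideanSpace ℝ (Fin 2))
    (R L θ₀ : ℝ) (hR : 0 < R) (hL : 0 < L)
    (hsmall : L ≤ 2 * (|wedge v₁ v₂| * R) ^ ((1 : ℝ) / 3)) :
    (arcOf O R θ₀ L ∩ lat v₀ v₁ v₂).ncard ≤ 2 := by
  have hAL : L ^ 3 / (8 * R) ≤ |wedge v₁ v₂| := by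
    rw [div_le_iff₀ (by positivity)]
    calc L ^ 3 ≤ (2 * (|wedge v₁ v₂| * R) ^ ((3 : ℕ)⁻¹ : ℝ)) ^ 3 := by
          rw [Nat.cast_ofNat, ← one_div]
          gcongr
      _ = |wedge v₁ v₂| * (8 * R) := by
          rw [mul_pow, rpow_inv_natCast_pow (by positivity) three_ne_zero]
          ring
  by_contra! hcard
  obtain ⟨_, ⟨⟨a, ha, rfl⟩, hPa⟩, _, ⟨⟨b, hb, rfl⟩, hPb⟩, _, ⟨⟨c, hc, rfl⟩, hPc⟩, hab, hac, hbc⟩ :=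
    (Set.two_lt_ncard (Set.finite_of_ncard_pos (by omega))).1 hcard
  have hA := abs_wedge_le_abs_wedge_sub_of_mem_lat hPa hPb hPc
    (wedge_circlePt_sub_ne_zero hab hbc hac hR.ne')
  have hlt := abs_wedge_circlePt_sub_lt hab hbc hac hR.ne' ha hb hc
  rw [show R ^ 2 * (L / R) ^ 3 / 8 = L ^ 3 / (8 * R) by field_simp] at hlt
  linarith

/-- an arc of length `L ≤ 2(A_L R)^{1/3}` on a circle of radius `R`
contains at most two lattice points. -/
theorem stmt_7 (O v₀ v₁ v₂ : EuclideanSpace ℝ (Fin 2))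
    (hli : LinearIndependent ℝ ![v₁, v₂])
    (R L θ₀ : ℝ) (hR : 0 < R) (hL : 0 < L)
    (hsmall : L ≤ 2 * (|wedge v₁ v₂| * R) ^ ((1 : ℝ) / 3)) :
    (arcOf O R θ₀ L ∩ lat v₀ v₁ v₂).ncard ≤ 2 :=
  stmt_7_general O v₀ v₁ v₂ R L θ₀ hR hL hsmall
end

section
/- Let P₁, P₂, P₃ be points on a circle of radius R and let P₁', P₂', P₃' be points with ‖P_j' − P_k'‖ ≥ d for j ≠ k (some d > 0) and ‖P_j − P_j'‖ ≤ δ for j = 1,2,3. If δ < d²/(2(R + d + √((R+d)² − d²))), then the points P₁', P₂', P₃' are not collinear. -/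
/-!
If `P₁', P₂', P₃'` were collinear, one of them, say `M' = lineMap A' B' t`, lies between the
other two. The point `Q = lineMap A B t` of the chord `AB` of the circle is `δ`-close to `M'`,
hence `2δ`-close to the circle, and its distances to `A` and `B` are at least `d - 2δ`.
By Stewart's identity `|QC|² = R² - t(1 - t)|AB|² ≤ R² - (d - 2δ)²`, so `Q` lies at depth
about `(d - 2δ)² / (2R)` inside the circle; the bound on `δ` says exactly that
`4Rδ < (d - 2δ)²`, which contradicts `R - 2δ ≤ |QC|`.
-/

open AffineMap EuclideanGeometry

section Affine

variable {V P : Type*} [NormedAddCommGroup V] [NormedSpace ℝ V] [MetricSpace P]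
  [NormedAddTorsor V P]

theorem dist_lineMap_lineMap_le {A B A' B' : P} {t : ℝ} (ht₀ : 0 ≤ t) (ht₁ : t ≤ 1) :
    dist (lineMap A B t) (lineMap A' B' t) ≤ (1 - t) * dist A A' + t * dist B B' := by
  rw [dist_eq_norm_vsub V, lineMap_vsub_lineMap, lineMap_apply_module, dist_eq_norm_vsub V,
    dist_eq_norm_vsub V]
  calc ‖(1 - t) • (A -ᵥ A') + t • (B -ᵥ B')‖
      ≤ ‖(1 - t) • (A -ᵥ A')‖ + ‖t • (B -ᵥ B')‖ := norm_add_le _ _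
    _ = (1 - t) * ‖A -ᵥ A'‖ + t * ‖B -ᵥ B'‖ := by
      rw [norm_smul_of_nonneg (by linarith), norm_smul_of_nonneg ht₀]

end Affine

section Inner

variable {V P : Type*} [NormedAddCommGroup V] [InnerProductSpace ℝ V] [MetricSpace P]
  [NormedAddTorsor V P]

theorem dist_lineMap_sq (A B C : P) (t : ℝ) :
    dist (lineMap A B t) C ^ 2 =
      (1 - t) * dist A C ^ 2 + t * dist B C ^ 2 - t * (1 - t) * dist A B ^ 2 := by
  have hAB : A -ᵥ B = (A -ᵥ C) - (B -ᵥ C) := (vsub_sub_vsub_cancel_right A B C).symm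
  have hQ : lineMap A B t -ᵥ C = (1 - t) • (A -ᵥ C) + t • (B -ᵥ C) := by
    rw [← lineMap_apply_module, ← lineMap_vsub_lineMap A B C C t, lineMap_same_apply]
  rw [dist_eq_norm_vsub V, dist_eq_norm_vsub V, dist_eq_norm_vsub V, dist_eq_norm_vsub V, hQ, hAB,
    ← real_inner_self_eq_norm_sq, ← real_inner_self_eq_norm_sq, ← real_inner_self_eq_norm_sq,
    ← real_inner_self_eq_norm_sq]
  simp only [inner_add_left, inner_add_right, inner_sub_left, inner_sub_right, real_inner_smul_left,
    real_inner_smul_right, real_inner_comm (A -ᵥ C)]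
  ring

theorem not_wbtw_of_near_sphere {s : Sphere P} {A M B A' M' B' : P} {d δ : ℝ}
    (hA : A ∈ s) (hM : M ∈ s) (hB : B ∈ s)
    (hAA' : dist A A' ≤ δ) (hMM' : dist M M' ≤ δ) (hBB' : dist B B' ≤ δ)
    (hAM' : d ≤ dist A' M') (hMB' : d ≤ dist M' B')
    (hδd : 2 * δ ≤ d) (hsag : 4 * s.radius * δ < (d - 2 * δ) ^ 2) :
    ¬ Wbtw ℝ A' M' B' := by
  rintro ⟨t, ⟨ht₀, ht₁⟩, hM'⟩
  set Q := lineMap A B t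
  have hQM' : dist Q M' ≤ δ :=
    hM' ▸ (dist_lineMap_lineMap_le ht₀ ht₁).trans (by nlinarith)
  have hAQ : d - 2 * δ ≤ t * dist A B := by
    have hAQ_eq : dist A Q = t * dist A B := by
      rw [dist_left_lineMap, Real.norm_of_nonneg ht₀]
    linarith [dist_triangle4 A' A Q M', dist_comm A A']
  have hQB : d - 2 * δ ≤ (1 - t) * dist A B := by
    have hQB_eq : dist Q B = (1 - t) * dist A B := by
      rw [dist_lineMap_right, Real.norm_of_nonneg (by linarith)]
    linarith [dist_triangle4 M' Q B B', dist_comm M' Q]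
  have hQC : s.radius - 2 * δ ≤ dist Q s.center := by
    linarith [dist_triangle4 M M' Q s.center, mem_sphere.1 hM, dist_comm M' Q]
  have hQC_sq : dist Q s.center ^ 2 = s.radius ^ 2 - t * (1 - t) * dist A B ^ 2 := by
    rw [dist_lineMap_sq, mem_sphere.1 hA, mem_sphere.1 hB]
    ring
  have hchord : (d - 2 * δ) ^ 2 ≤ t * (1 - t) * dist A B ^ 2 := by
    nlinarith [mul_le_mul hAQ hQB (by linarith) (by linarith)]
  have hr : 0 ≤ s.radius := mem_sphere.1 hA ▸ dist_nonneg
  rcases le_total (2 * δ) s.radius with hδr | hrδ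
  · nlinarith [mul_le_mul hQC hQC (by linarith) dist_nonneg, sq_nonneg δ]
  · nlinarith [mul_nonneg hr (by linarith : 0 ≤ 4 * δ - s.radius)]

end Inner

/-- The bound is `(R + d - √(R² + 2Rd)) / 2` in disguise. -/
theorem two_mul_lt_and_four_mul_lt_sq_of_lt {R d δ : ℝ} (hR : 0 ≤ R) (hd : 0 < d)
    (hδ : δ < d ^ 2 / (2 * (R + d + √((R + d) ^ 2 - d ^ 2)))) :
    2 * δ < d ∧ 4 * R * δ < (d - 2 * δ) ^ 2 := by
  set s := √((R + d) ^ 2 - d ^ 2)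
  have hs_sq : s ^ 2 = (R + d) ^ 2 - d ^ 2 := Real.sq_sqrt (by nlinarith)
  have hRs : R ≤ s := (Real.le_sqrt hR (by nlinarith)).2 (by nlinarith)
  have hbound : d ^ 2 / (2 * (R + d + s)) = (R + d - s) / 2 := by
    rw [div_eq_div_iff (by positivity) two_ne_zero]
    linear_combination 2 * hs_sq
  rw [hbound] at hδ
  refine ⟨by linarith, ?_⟩
  nlinarith [Real.sqrt_nonneg ((R + d) ^ 2 - d ^ 2)]

theorem stmt_15_general (C P₁ P₂ P₃ P₁' P₂' P₃' : EuclideanSpace ℝ (Fin 2)) (R d δ : ℝ)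
    (hd : 0 < d)
    (h₁ : dist P₁ C = R) (h₂ : dist P₂ C = R) (h₃ : dist P₃ C = R)
    (hd₁₂ : d ≤ dist P₁' P₂') (hd₁₃ : d ≤ dist P₁' P₃') (hd₂₃ : d ≤ dist P₂' P₃')
    (hc₁ : dist P₁ P₁' ≤ δ) (hc₂ : dist P₂ P₂' ≤ δ) (hc₃ : dist P₃ P₃' ≤ δ)
    (hδ : δ < d ^ 2 / (2 * (R + d + Real.sqrt ((R + d) ^ 2 - d ^ 2)))) :
    ¬ Collinear ℝ ({P₁', P₂', P₃'} : Set (EuclideanSpace ℝ (Fin 2))) := by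
  intro hcol
  obtain ⟨hδd, hsag⟩ := two_mul_lt_and_four_mul_lt_sq_of_lt (h₁ ▸ dist_nonneg) hd hδ
  let s : Sphere (EuclideanSpace ℝ (Fin 2)) := ⟨C, R⟩
  have hP₁ : P₁ ∈ s := mem_sphere.2 h₁
  have hP₂ : P₂ ∈ s := mem_sphere.2 h₂
  have hP₃ : P₃ ∈ s := mem_sphere.2 h₃
  rcases hcol.wbtw_or_wbtw_or_wbtw with h | h | h
  · exact not_wbtw_of_near_sphere hP₁ hP₂ hP₃ hc₁ hc₂ hc₃ hd₁₂ hd₂₃ hδd.le hsag h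
  · exact not_wbtw_of_near_sphere hP₂ hP₃ hP₁ hc₂ hc₃ hc₁ hd₂₃ (dist_comm P₁' P₃' ▸ hd₁₃)
      hδd.le hsag h
  · exact not_wbtw_of_near_sphere hP₃ hP₁ hP₂ hc₃ hc₁ hc₂ (dist_comm P₁' P₃' ▸ hd₁₃) hd₁₂
      hδd.le hsag h

/-- three points δ-close to a circle of radius R, pairwise at
distance ≥ d, are not collinear when δ < d²/(2(R+d+√((R+d)²−d²))). -/
theorem stmt_15 (C P₁ P₂ P₃ P₁' P₂' P₃' : EuclideanSpace ℝ (Fin 2)) (R d δ : ℝ)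
    (hR : 0 < R) (hd : 0 < d)
    (h₁ : dist P₁ C = R) (h₂ : dist P₂ C = R) (h₃ : dist P₃ C = R)
    (hd₁₂ : d ≤ dist P₁' P₂') (hd₁₃ : d ≤ dist P₁' P₃') (hd₂₃ : d ≤ dist P₂' P₃')
    (hc₁ : dist P₁ P₁' ≤ δ) (hc₂ : dist P₂ P₂' ≤ δ) (hc₃ : dist P₃ P₃' ≤ δ)
    (hδ : δ < d ^ 2 / (2 * (R + d + Real.sqrt ((R + d) ^ 2 - d ^ 2)))) :
    ¬ Collinear ℝ ({P₁', P₂', P₃'} : Set (EuclideanSpace ℝ (Fin 2))) :=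
  stmt_15_general C P₁ P₂ P₃ P₁' P₂' P₃' R d δ hd h₁ h₂ h₃ hd₁₂ hd₁₃ hd₂₃ hc₁ hc₂ hc₃ hδ
end
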